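/- arXiv:2405.00770 — 2 statements merged into one kernel-verified Lean document; each statement's English description precedes it below -/
import Mathlib

section
/- For any real number p with 0 ≤ p ≤ 3/4 and q = 2p/3, the probability that an odd number of three independent bit-flips each occurring with probability q happens, namely 3(1-q)^2 q + q^3, is at most e^{-p/2}. -/
theorem odd_flip_prob_le (p q : ℝ) (hp0 : 0 ≤ p) (hp1 : p ≤ 3/4) (hq : q = 2*p/3) :
    3*(1-q)^2*q + q^3 ≤ Real.exp (-p/2) := by
  subst hq
  have h := Real.add_one_le_exp (-p/2)
  nlinarith [sq_nonneg p, sq_nonneg (1 - p), pow_nonneg hp0 3]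
end

section
/- For any real number p with 0 ≤ p ≤ 3/4 and q = 2p/3, the probability that an even number of three independent bit-flips each occurring with probability q happens, namely (1-q)^3 + 3(1-q)q^2, is at most e^{-p/2}. -/
theorem even_flip_prob_le (p q : ℝ) (hp0 : 0 ≤ p) (hp1 : p ≤ 3/4) (hq : q = 2*p/3) :
    (1-q)^3 + 3*(1-q)*q^2 ≤ Real.exp (-p/2) := by
  have h1 : (1-q)^3 + 3*(1-q)*q^2 ≤ 1 + (-p/2) := by
    subst hq; nlinarith [sq_nonneg p, mul_nonneg hp0 hp0, sq_nonneg (p - 3/4)]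
  linarith [Real.add_one_le_exp (-p/2)]
end
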